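/- Let t* maximize b_{2k}(n,t), the number of edges of B^(2k)(n,t). Then |t*| < sqrt(2kn). Consequently |b_{2k}(n) - (1/2)binom(n,2k)| < (20kn)^k for sufficiently large n. -/

import Mathlib

/-- `b_{2k}(n,t)`, with the bipartition of `Fin n` given by `{x : x < a}` and its
complement, so that `a = n/2 + t`: the number of `2k`-subsets having odd intersection
with both parts. -/
def bpart (k n a : ℕ) : ℕ :=
  (Finset.univ.filter (fun X : Finset (Fin n) =>
    X.card = 2 * k ∧ Odd (X.filter (fun x : Fin n => (x : ℕ) < a)).card ∧
      Odd (X.filter (fun x : Fin n => ¬ (x : ℕ) < a)).card)).card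

section KrawtchoukAux
open Polynomial Finset

noncomputable def Qp (n a : ℕ) : Polynomial ℝ := (X - 1)^a * (X + 1)^(n - a)

lemma Qp_monic (n a : ℕ) : (Qp n a).Monic := by
  unfold Qp
  simp only [← C_1 (R := ℝ)]
  exact ((monic_X_sub_C 1).pow a).mul ((monic_X_add_C 1).pow (n - a))

lemma Qp_natDegree (n a : ℕ) (h : a ≤ n) : (Qp n a).natDegree = n := by
  unfold Qp
  simp only [← C_1 (R := ℝ)]
  rw [Monic.natDegree_mul ((monic_X_sub_C 1).pow a) ((monic_X_add_C 1).pow (n-a)),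
    (monic_X_sub_C (1:ℝ)).natDegree_pow, (monic_X_add_C (1:ℝ)).natDegree_pow]
  simp only [natDegree_X_sub_C, natDegree_X_add_C]
  omega

lemma Qp_coeff_n (n a : ℕ) (h : a ≤ n) : (Qp n a).coeff n = 1 := by
  have := (Qp_monic n a).leadingCoeff
  rwa [leadingCoeff, Qp_natDegree n a h] at this

lemma Qp_coeff_gt (n a : ℕ) (h : a ≤ n) {m : ℕ} (hm : n < m) : (Qp n a).coeff m = 0 :=
  coeff_eq_zero_of_natDegree_lt (by rw [Qp_natDegree n a h]; exact hm)

lemma Qp_ode (n a : ℕ) (h : a ≤ n) :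
    (X - 1) * (X + 1) * derivative (Qp n a)
      = (C (n : ℝ) * X + C (2*(a:ℝ) - n)) * Qp n a := by
  unfold Qp
  rw [derivative_mul, derivative_pow, derivative_pow]
  have h1 : derivative (X - 1 : ℝ[X]) = 1 := by simp
  have h2 : derivative (X + 1 : ℝ[X]) = 1 := by simp
  have hcast : ((n - a : ℕ) : ℝ) = (n : ℝ) - a := by
    push_cast [Nat.cast_sub h]; ring
  have hc : (C ((n - a :ℕ):ℝ) : ℝ[X]) = C ((n:ℝ) - a) := by rw [hcast]
  have ea : (X - 1 : ℝ[X]) * (C (a:ℝ) * (X-1)^(a-1)) = C (a:ℝ) * (X-1)^a := by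
    cases a with
    | zero => simp
    | succ a' => simp only [Nat.succ_sub_one, pow_succ]; ring
  have eb : (X + 1 : ℝ[X]) * ((C (n:ℝ) - C (a:ℝ)) * (X+1)^(n-a-1))
      = (C (n:ℝ) - C (a:ℝ)) * (X+1)^(n-a) := by
    cases hb : n - a with
    | zero =>
      have hna : n = a := by omega
      simp [hna]
    | succ b' => simp only [Nat.succ_sub_one, pow_succ]; ring
  rw [h1, h2, hc]
  simp only [C_sub, C_mul, map_ofNat]
  linear_combination ((X+1:ℝ[X]) * (X+1)^(n-a)) * ea + ((X-1:ℝ[X]) * (X-1)^a) * eb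

lemma Qp_rec (n a : ℕ) (h : a ≤ n) (m : ℕ) (hm : 1 ≤ m) :
    ((m:ℝ) - 1) * (Qp n a).coeff (m-1) - ((m:ℝ)+1) * (Qp n a).coeff (m+1)
      = n * (Qp n a).coeff (m-1) + (2*(a:ℝ) - n) * (Qp n a).coeff m := by
  obtain ⟨m', rfl⟩ : ∃ m', m = m' + 1 := ⟨m - 1, by omega⟩
  have H := congrArg (fun p : ℝ[X] => p.coeff (m' + 1)) (Qp_ode n a h)
  rw [show (X - 1 : ℝ[X]) * (X + 1) * derivative (Qp n a)
      = derivative (Qp n a) * X^2 - derivative (Qp n a) by ring] at H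
  rw [coeff_sub, coeff_mul_X_pow'] at H
  rw [show (C (n:ℝ) * X + C (2*(a:ℝ) - n)) * Qp n a
      = C (n:ℝ) * (X * Qp n a) + C (2*(a:ℝ) - n) * Qp n a by ring] at H
  rw [coeff_add, coeff_C_mul, coeff_C_mul, coeff_X_mul] at H
  simp only [Nat.add_sub_cancel]
  cases m' with
  | zero =>
    simp only [show ¬ (2 ≤ 0 + 1) by omega, if_false, coeff_derivative] at H
    push_cast at H ⊢
    linarith
  | succ m'' =>
    rw [if_pos (by omega : 2 ≤ m'' + 1 + 1),
      show m'' + 1 + 1 - 2 = m'' by omega] at H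
    simp only [coeff_derivative] at H
    push_cast at H ⊢
    linarith

lemma rec_pos (k n : ℕ) (hk : 0 < k) (hn : 0 < n) (h2k : 2*k ≤ n) (g : ℕ → ℝ) (r : ℝ)
    (hr : 2 * Real.sqrt (2*k*n) ≤ r)
    (hg0 : g 0 = 1) (hg1 : g 1 = r)
    (hrec : ∀ j, 1 ≤ j → j + 1 ≤ 2*k →
      ∃ b : ℝ, 0 ≤ b ∧ b ≤ n ∧ ((j:ℝ)+1) * g (j+1) = r * g j - b * g (j-1)) :
    0 < g (2*k) := by
  set s := Real.sqrt (2*(k:ℝ)*n) with hs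
  have hs0 : 0 < s := Real.sqrt_pos.mpr (by positivity)
  have hss : s * s = 2*(k:ℝ)*n := Real.mul_self_sqrt (by positivity)
  set c := s / (2*k) with hc
  have hc0 : 0 < c := by positivity
  have hns : (n:ℝ) * s = s * s * s / 2 / k := by
    field_simp
    nlinarith [hss]
  have key : ∀ j : ℕ, j + 1 ≤ 2*k → 0 < g j ∧ c * g j ≤ g (j+1) := by
    intro j
    induction j with
    | zero =>
      intro _
      refine ⟨by rw [hg0]; norm_num, ?_⟩
      rw [hg0, hg1, mul_one]
      have h2k1 : (1:ℝ) ≤ 2*k := by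
        have : (1:ℕ) ≤ 2*k := by omega
        exact_mod_cast this
      have : c ≤ s := by
        rw [hc]
        exact div_le_self (le_of_lt hs0) h2k1
      nlinarith
    | succ j ih =>
      intro hj2
      have hj1 : j + 1 ≤ 2*k := by omega
      obtain ⟨hgj, hcj⟩ := ih hj1
      have hgj1 : 0 < g (j+1) := lt_of_lt_of_le (by positivity) hcj
      obtain ⟨b, hb0, hbn, hrec'⟩ := hrec (j+1) (by omega) (by omega)
      simp only [Nat.add_sub_cancel] at hrec'
      refine ⟨hgj1, ?_⟩
      -- b * g j ≤ n * g j ≤ n * (g (j+1) / c) = s * g (j+1)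
      have h1 : b * g j ≤ (n:ℝ) * g j := mul_le_mul_of_nonneg_right hbn (le_of_lt hgj)
      have h2 : (n:ℝ) * g j ≤ (n:ℝ) * (g (j+1) / c) := by
        apply mul_le_mul_of_nonneg_left _ (by positivity)
        rw [le_div_iff₀ hc0]
        linarith [hcj]
      have h3 : (n:ℝ) * (g (j+1) / c) = s * g (j+1) := by
        rw [hc]
        field_simp
        nlinarith [hss]
      push_cast at hrec'
      have h4 : ((j:ℝ)+1+1) * g (j+1+1) ≥ 2 * s * g (j+1) - s * g (j+1) := by
        have : r * g (j+1) ≥ 2 * s * g (j+1) := mul_le_mul_of_nonneg_right hr (le_of_lt hgj1)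
        nlinarith [hrec', h1, h2, h3]
      have h5 : ((j:ℝ)+1+1) * g (j+1+1) ≥ s * g (j+1) := by linarith
      have hj2k : ((j:ℝ)+1+1) ≤ 2*(k:ℝ) := by
        have : ((j+1+1 : ℕ):ℝ) ≤ ((2*k : ℕ):ℝ) := by exact_mod_cast hj2
        push_cast at this; linarith
      have h6 : 0 < (j:ℝ)+1+1 := by positivity
      have h7 : g (j+1+1) ≥ s * g (j+1) / ((j:ℝ)+1+1) := by
        rw [ge_iff_le, div_le_iff₀ h6]
        linarith [h5]
      have h8 : s * g (j+1) / ((j:ℝ)+1+1) ≥ s * g (j+1) / (2*(k:ℝ)) :=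
        div_le_div_of_nonneg_left (by positivity) h6 hj2k
      have h9 : c * g (j+1) = s * g (j+1) / (2*(k:ℝ)) := by rw [hc]; ring
      linarith
  have h2k1 : 1 ≤ 2*k := by omega
  obtain ⟨h1, h2⟩ := key (2*k - 1) (by omega)
  have : 2*k - 1 + 1 = 2*k := by omega
  rw [this] at h2
  have : 0 < c * g (2*k-1) := by positivity
  linarith

lemma card_filter_lt (n a : ℕ) (h : a ≤ n) :
    (Finset.univ.filter (fun x : Fin n => (x:ℕ) < a)).card = a := by
  rw [← Finset.card_range a]
  apply Finset.card_bij (fun (x : Fin n) _ => (x : ℕ))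
  · intro x hx; simp only [mem_filter] at hx; simpa using hx.2
  · intro x hx y hy hxy; exact Fin.val_injective hxy
  · intro i hi
    simp only [Finset.mem_range] at hi
    exact ⟨⟨i, lt_of_lt_of_le hi h⟩, by simpa using hi, rfl⟩

lemma Qp_prod (n a : ℕ) (h : a ≤ n) :
    Qp n a = ∏ i : Fin n, (X + C (if (i:ℕ) < a then (-1:ℝ) else 1)) := by
  rw [← Finset.prod_filter_mul_prod_filter_not Finset.univ (fun i : Fin n => (i:ℕ) < a)]
  rw [Finset.prod_congr rfl (fun i hi => by rw [if_pos (Finset.mem_filter.mp hi).2]),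
      Finset.prod_congr (rfl :
        (Finset.univ.filter (fun i : Fin n => ¬ (i:ℕ) < a)) = _)
        (fun i hi => by rw [if_neg (Finset.mem_filter.mp hi).2])]
  rw [Finset.prod_const, Finset.prod_const, card_filter_lt n a h]
  have hcc : (Finset.univ.filter (fun i : Fin n => ¬ (i:ℕ) < a)).card = n - a := by
    have := Finset.card_filter_add_card_filter_not (s := (Finset.univ : Finset (Fin n)))
      (p := fun i : Fin n => (i:ℕ) < a)
    rw [card_filter_lt n a h, Finset.card_univ, Fintype.card_fin] at this
    omega
  rw [hcc]
  unfold Qp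
  rw [show (C (-1:ℝ) : ℝ[X]) = -1 by simp, show (C (1:ℝ) : ℝ[X]) = 1 by simp,
    sub_eq_add_neg]

lemma Qp_coeff_eq_sum (k n a : ℕ) (h2k : 2*k ≤ n) (h : a ≤ n) :
    (Qp n a).coeff (n - 2*k)
      = ∑ t ∈ Finset.powersetCard (2*k) (Finset.univ : Finset (Fin n)),
          (-1:ℝ)^(t.filter (fun x : Fin n => (x:ℕ) < a)).card := by
  rw [Qp_prod n a h]
  rw [Finset.prod_X_add_C_coeff _ _ (by rw [Finset.card_univ, Fintype.card_fin]; omega)]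
  rw [show (Finset.univ : Finset (Fin n)).card - (n - 2*k) = 2*k by
    rw [Finset.card_univ, Fintype.card_fin]; omega]
  apply Finset.sum_congr rfl
  intro t ht
  rw [← Finset.prod_filter_mul_prod_filter_not t (fun i : Fin n => (i:ℕ) < a)]
  rw [Finset.prod_congr rfl (fun i hi => if_pos (Finset.mem_filter.mp hi).2),
      Finset.prod_congr (rfl : (t.filter (fun i : Fin n => ¬ (i:ℕ) < a)) = _)
        (fun i hi => if_neg (Finset.mem_filter.mp hi).2)]
  rw [Finset.prod_const, Finset.prod_const, one_pow, mul_one]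

lemma bpart_eq (k n a : ℕ) (h2k : 2*k ≤ n) (h : a ≤ n) :
    2 * (bpart k n a : ℝ) = (n.choose (2*k) : ℝ) - (Qp n a).coeff (n - 2*k) := by
  classical
  set p : Finset (Fin n) → Prop := fun X => Odd (X.filter (fun x : Fin n => (x:ℕ) < a)).card
    with hp
  set S := Finset.powersetCard (2*k) (Finset.univ : Finset (Fin n)) with hS
  have h1 : bpart k n a = (S.filter p).card := by
    unfold bpart
    congr 1
    ext X
    simp only [hS, hp, Finset.mem_filter, Finset.mem_powersetCard_univ, Finset.mem_univ,
      true_and]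
    constructor
    · rintro ⟨hc, h1, _⟩; exact ⟨hc, h1⟩
    · rintro ⟨hc, h1⟩
      refine ⟨hc, h1, ?_⟩
      have hsplit := Finset.card_filter_add_card_filter_not (s := X)
        (p := fun x : Fin n => (x:ℕ) < a)
      rw [hc] at hsplit
      rw [Nat.odd_iff] at h1 ⊢
      omega
  have h2 : (S.filter p).card + (S.filter (fun X => ¬ p X)).card = n.choose (2*k) := by
    rw [Finset.card_filter_add_card_filter_not, hS, Finset.card_powersetCard,
      Finset.card_univ, Fintype.card_fin]
  have h3 : (Qp n a).coeff (n - 2*k)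
      = ((S.filter (fun X => ¬ p X)).card : ℝ) - ((S.filter p).card : ℝ) := by
    rw [Qp_coeff_eq_sum k n a h2k h]
    rw [← Finset.sum_filter_add_sum_filter_not S p]
    rw [Finset.sum_congr rfl (fun t ht => (Finset.mem_filter.mp ht).2.neg_one_pow),
        Finset.sum_congr (rfl : S.filter (fun X => ¬ p X) = _) (fun t ht =>
          (Nat.not_odd_iff_even.mp (Finset.mem_filter.mp ht).2).neg_one_pow)]
    rw [Finset.sum_const, Finset.sum_const]
    simp
    ring
  rw [h1, h3]
  have := h2
  push_cast [← h2]
  ring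

lemma exists_nonpos (k n : ℕ) (hk : 0 < k) (h2k : 2*k ≤ n) :
    ∃ a ≤ n, (Qp n a).coeff (n - 2*k) ≤ 0 := by
  by_contra hcon
  push_neg at hcon
  have hsum : ∑ a ∈ Finset.range (n+1), (n.choose a : ℝ) * (Qp n a).coeff (n-2*k) = 0 := by
    have hpoly : ∑ a ∈ Finset.range (n+1), C ((n.choose a : ℝ)) * Qp n a = C (2:ℝ)^n * X^n := by
      have := add_pow (X - 1 : ℝ[X]) (X + 1) n
      rw [show (X - 1 + (X + 1) : ℝ[X]) = C 2 * X by
        rw [map_ofNat C 2]; ring] at this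
      rw [mul_pow] at this
      rw [this]
      apply Finset.sum_congr rfl
      intro a ha
      unfold Qp
      rw [C_eq_natCast]
      ring
    have := congrArg (fun p : ℝ[X] => p.coeff (n - 2*k)) hpoly
    simp only [finset_sum_coeff, ← C_pow, coeff_C_mul, coeff_X_pow] at this
    rw [if_neg (by omega : ¬ (n - 2*k = n))] at this
    simpa using this
  have hpos : 0 < ∑ a ∈ Finset.range (n+1), (n.choose a : ℝ) * (Qp n a).coeff (n-2*k) := by
    apply Finset.sum_pos'
    · intro a ha
      have := hcon a (by simp only [Finset.mem_range] at ha; omega)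
      positivity
    · refine ⟨0, by simp, ?_⟩
      have := hcon 0 (by omega)
      simp only [Nat.choose_zero_right, Nat.cast_one, one_mul]
      exact this
  linarith

lemma coeff_bound (k n b m : ℕ) (ε : ℝ) (hε : |ε| = 1)
    (hbm : 2*b + m = n) (hk : 0 < k) (h2k : 2*k ≤ n) (hm2 : ((m:ℝ))^2 ≤ 8*k*n) :
    |((X^2 - 1)^b * (X + C ε)^m : ℝ[X]).coeff (n - 2*k)|
      ≤ ((k:ℝ)+1) * (8*(k:ℝ)*n)^k := by
  have h8kn : (1:ℝ) ≤ 8*(k:ℝ)*n := by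
    have hk1 : (1:ℝ) ≤ (k:ℝ) := by exact_mod_cast hk
    have hn1 : (1:ℝ) ≤ (n:ℝ) := by
      have : 1 ≤ n := by omega
      exact_mod_cast this
    nlinarith
  have h8kn0 : (0:ℝ) ≤ 8*(k:ℝ)*n := by linarith
  set d := n - 2*k with hd
  set w : ℝ[X] := (X + C ε)^m with hw
  have hexp : ((X^2 - 1 : ℝ[X])^b * w).coeff d
      = ∑ i ∈ Finset.range (b+1),
          ((-1:ℝ)^(b-i) * (b.choose i : ℝ)) * (if 2*i ≤ d then w.coeff (d - 2*i) else 0) := by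
    rw [show (X^2 - 1 : ℝ[X]) = X^2 + (-1) by ring, add_pow, Finset.sum_mul,
      finset_sum_coeff]
    apply Finset.sum_congr rfl
    intro i hi
    rw [show (X^2:ℝ[X])^i * (-1)^(b-i) * (↑(b.choose i)) * w
        = C ((-1:ℝ)^(b-i) * (b.choose i : ℝ)) * (w * X^(2*i)) by
      simp only [C_mul, C_pow, map_neg, map_one, C_eq_natCast, pow_mul]; ring]
    rw [coeff_C_mul, coeff_mul_X_pow']
  rw [hexp]
  have hterm : ∀ i ∈ Finset.range (b+1),
      |((-1:ℝ)^(b-i) * (b.choose i : ℝ)) * (if 2*i ≤ d then w.coeff (d - 2*i) else 0)|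
        ≤ if b ≤ i + k then (8*(k:ℝ)*n)^k else 0 := by
    intro i hi
    simp only [Finset.mem_range] at hi
    have hib : i ≤ b := by omega
    by_cases hcase : b ≤ i + k
    · rw [if_pos hcase]
      by_cases h2id : 2*i ≤ d
      · rw [if_pos h2id, hw, coeff_X_add_C_pow]
        rw [abs_mul, abs_mul, abs_mul, abs_pow, abs_pow, abs_neg, abs_one, one_pow, one_mul,
          hε, one_pow, one_mul]
        rw [Nat.abs_cast, Nat.abs_cast]
        set u := b - i with hu
        have huk : u ≤ k := by omega
        -- choose b i ≤ n ^ u ≤ (8kn)^u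
        have hc1 : (b.choose i : ℝ) ≤ (8*(k:ℝ)*n)^u := by
          have e1 : b.choose i = b.choose u := by rw [hu, Nat.choose_symm hib]
          have e2 : b.choose u ≤ b ^ u := Nat.choose_le_pow b u
          have e3 : b ^ u ≤ n ^ u := Nat.pow_le_pow_left (by omega) u
          have : (b.choose i : ℝ) ≤ (n:ℝ)^u := by exact_mod_cast le_trans (e1 ▸ e2) e3
          refine le_trans this (pow_le_pow_left₀ (by positivity) ?_ u)
          have hk1 : (1:ℝ) ≤ (k:ℝ) := by exact_mod_cast hk
          have hn0 : (0:ℝ) ≤ (n:ℝ) := by positivity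
          nlinarith
        have hc2 : (m.choose (d - 2*i) : ℝ) ≤ (8*(k:ℝ)*n)^(k - u) := by
          by_cases hdm : d - 2*i ≤ m
          · have e1 : m - (d - 2*i) = 2*(k - u) := by omega
            have e2 : m.choose (d - 2*i) = m.choose (2*(k-u)) := by
              rw [← e1, Nat.choose_symm hdm]
            have e3 : m.choose (2*(k-u)) ≤ m ^ (2*(k-u)) := Nat.choose_le_pow _ _
            have e4 : m.choose (d - 2*i) ≤ m ^ (2*(k-u)) := by rw [e2]; exact e3
            have : (m.choose (d - 2*i) : ℝ) ≤ ((m:ℝ)^2)^(k-u) := by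
              rw [← pow_mul]
              exact_mod_cast e4
            exact le_trans this (pow_le_pow_left₀ (by positivity) hm2 (k-u))
          · rw [Nat.choose_eq_zero_of_lt (by omega)]
            simp only [Nat.cast_zero]
            positivity
        calc (b.choose i : ℝ) * (m.choose (d - 2*i) : ℝ)
            ≤ (8*(k:ℝ)*n)^u * (8*(k:ℝ)*n)^(k-u) := by
              apply mul_le_mul hc1 hc2 (by positivity) (by positivity)
          _ = (8*(k:ℝ)*n)^k := by rw [← pow_add]; congr 1; omega
      · rw [if_neg h2id, mul_zero, abs_zero]
        positivity
    · rw [if_neg hcase]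
      -- term is zero
      by_cases h2id : 2*i ≤ d
      · rw [if_pos h2id, hw, coeff_X_add_C_pow]
        rw [Nat.choose_eq_zero_of_lt (by omega : m < d - 2*i)]
        simp
      · rw [if_neg h2id, mul_zero, abs_zero]
  calc |∑ i ∈ Finset.range (b+1), _| ≤ ∑ i ∈ Finset.range (b+1),
        |((-1:ℝ)^(b-i) * (b.choose i : ℝ)) * (if 2*i ≤ d then w.coeff (d - 2*i) else 0)| :=
        Finset.abs_sum_le_sum_abs _ _
    _ ≤ ∑ i ∈ Finset.range (b+1), (if b ≤ i + k then (8*(k:ℝ)*n)^k else 0) :=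
        Finset.sum_le_sum hterm
    _ ≤ ((k:ℝ)+1) * (8*(k:ℝ)*n)^k := by
        rw [← Finset.sum_filter]
        rw [Finset.sum_const]
        have hcard : ((Finset.range (b+1)).filter (fun i => b ≤ i + k)).card ≤ k + 1 := by
          have hsub : ((Finset.range (b+1)).filter (fun i => b ≤ i + k))
              ⊆ Finset.Icc (b - k) b := by
            intro i hi
            simp only [Finset.mem_filter, Finset.mem_range] at hi
            simp only [Finset.mem_Icc]
            omega
          have := Finset.card_le_card hsub
          rw [Nat.card_Icc] at this
          omega
        rw [nsmul_eq_mul]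
        apply mul_le_mul_of_nonneg_right _ (by positivity)
        calc (((Finset.range (b+1)).filter (fun i => b ≤ i + k)).card : ℝ)
            ≤ ((k+1 : ℕ) : ℝ) := by exact_mod_cast hcard
          _ = (k:ℝ)+1 := by push_cast; ring

lemma Qp_factor_le (n a : ℕ) (h2a : 2*a ≤ n) :
    Qp n a = (X^2 - 1)^a * (X + C (1:ℝ))^(n - 2*a) := by
  unfold Qp
  rw [show n - a = a + (n - 2*a) by omega, pow_add, show (C (1:ℝ) : ℝ[X]) = 1 by simp,
    ← mul_assoc, ← mul_pow, show ((X:ℝ[X]) - 1)*(X+1) = X^2-1 by ring]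

lemma Qp_factor_ge (n a : ℕ) (h : a ≤ n) (h2a : n ≤ 2*a) :
    Qp n a = (X^2 - 1)^(n - a) * (X + C (-1:ℝ))^(2*a - n) := by
  unfold Qp
  have key : ∀ (b c : ℕ), (X - 1 : ℝ[X])^(b + c) * (X+1)^b = (X^2-1)^b * (X + C (-1))^c := by
    intro b c
    rw [pow_add, show (C (-1:ℝ) : ℝ[X]) = -1 by simp, show (X:ℝ[X]) + (-1) = X - 1 by ring,
      show (X - 1 : ℝ[X])^b * (X-1)^c * (X+1)^b = ((X-1)*(X+1))^b * (X-1)^c by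
        rw [mul_pow]; ring,
      show ((X:ℝ[X]) - 1)*(X+1) = X^2-1 by ring]
  have hkey := key (n - a) (2*a - n)
  rw [show (n - a) + (2*a - n) = a by omega] at hkey
  exact hkey

lemma Qp_coeff_n1 (n a : ℕ) (h : a ≤ n) (hn : 0 < n) :
    (Qp n a).coeff (n-1) = (n:ℝ) - 2*a := by
  have H := Qp_rec n a h n (by omega)
  rw [Qp_coeff_gt n a h (by omega : n < n + 1), Qp_coeff_n n a h] at H
  have hcast : ((n:ℝ) + 1) * 0 = 0 := by ring
  -- H : (n-1) * coeff (n-1) - (n+1) * 0 = n * coeff (n-1) + (2a - n) * 1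
  nlinarith [H]

lemma Kg_rec (n a : ℕ) (h : a ≤ n) (j : ℕ) (hj1 : 1 ≤ j) (hj : j + 1 ≤ n) :
    ((j:ℝ)+1) * (Qp n a).coeff (n - (j+1))
      = ((n:ℝ) - 2*a) * (Qp n a).coeff (n - j)
        - (((n:ℝ) - j) + 1) * (Qp n a).coeff (n - (j-1)) := by
  have H := Qp_rec n a h (n - j) (by omega)
  rw [show n - j - 1 = n - (j+1) by omega, show n - j + 1 = n - (j-1) by omega] at H
  have hcast : ((n - j : ℕ) : ℝ) = (n:ℝ) - j := by
    push_cast [Nat.cast_sub (by omega : j ≤ n)]; ring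
  rw [hcast] at H
  nlinarith [H]

lemma Kpos (k n a : ℕ) (hk : 0 < k) (hn : 0 < n) (h2k : 2*k ≤ n) (ha : a ≤ n)
    (habs : 2 * Real.sqrt (2*k*n) ≤ |(n:ℝ) - 2*a|) :
    0 < (Qp n a).coeff (n - 2*k) := by
  have hs0 : 0 ≤ Real.sqrt (2*(k:ℝ)*n) := Real.sqrt_nonneg _
  by_cases hsgn : 0 ≤ (n:ℝ) - 2*a
  · rw [abs_of_nonneg hsgn] at habs
    exact rec_pos k n hk hn h2k (fun j => (Qp n a).coeff (n - j)) ((n:ℝ) - 2*a) habs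
      (by simpa using Qp_coeff_n n a ha)
      (Qp_coeff_n1 n a ha hn)
      (fun j hj1 hj2 => ⟨((n:ℝ) - j) + 1, by
        have : (j:ℝ) ≤ n := by
          have : j ≤ n := by omega
          exact_mod_cast this
        constructor
        · linarith
        · constructor
          · have hj1' : (1:ℝ) ≤ j := by exact_mod_cast hj1
            linarith
          · exact Kg_rec n a ha j hj1 (by omega)⟩)
  · push_neg at hsgn
    rw [abs_of_neg (by linarith)] at habs
    have hmain := rec_pos k n hk hn h2k
      (fun j => (-1:ℝ)^j * (Qp n a).coeff (n - j)) (2*(a:ℝ) - n)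
      (by linarith) (by simp [Qp_coeff_n n a ha])
      (by
        simp only [pow_one]
        rw [Qp_coeff_n1 n a ha hn]
        ring)
      (fun j hj1 hj2 => ⟨((n:ℝ) - j) + 1, by
        have hjn : (j:ℝ) ≤ n := by
          have : j ≤ n := by omega
          exact_mod_cast this
        refine ⟨by linarith, by
          have hj1' : (1:ℝ) ≤ j := by exact_mod_cast hj1
          linarith, ?_⟩
        obtain ⟨j', rfl⟩ : ∃ j', j = j' + 1 := ⟨j - 1, by omega⟩
        have H := Kg_rec n a ha (j'+1) hj1 (by omega)
        simp only [Nat.add_sub_cancel]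
        rw [show (-1:ℝ)^(j'+1+1) = (-1)^j' * 1 by ring,
          show (-1:ℝ)^(j'+1) = -(-1)^j' by ring]
        push_cast at H ⊢
        linear_combination ((-1:ℝ)^j') * H⟩)
    have hmain' : 0 < (-1:ℝ)^(2*k) * (Qp n a).coeff (n - 2*k) := hmain
    rw [pow_mul] at hmain'
    norm_num at hmain'
    exact hmain'

end KrawtchoukAux

section Main
open Polynomial Finset

/-- if `t*` maximizes `b_{2k}(n,t)` (i.e. the part size `a = n/2 + t*`
maximizes `bpart`), then `|t*| < √(2kn)`; consequently, for sufficiently large `n`,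
`|b_{2k}(n) - (1/2) binom(n,2k)| < (20kn)^k`. -/
theorem stmt_19 (k : ℕ) (hk : 0 < k) :
    (∀ n a : ℕ, 0 < n → a ≤ n → (∀ a' ≤ n, bpart k n a' ≤ bpart k n a) →
      |(a : ℝ) - (n : ℝ) / 2| < Real.sqrt (2 * k * n)) ∧
    ∃ n0 : ℕ, ∀ n : ℕ, n0 ≤ n → ∀ a ≤ n, (∀ a' ≤ n, bpart k n a' ≤ bpart k n a) →
      |(bpart k n a : ℝ) - (1 / 2) * ((n.choose (2 * k)) : ℝ)| <
        ((20 * k * n : ℕ) : ℝ) ^ k := by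
  have part1 : ∀ n a : ℕ, 0 < n → a ≤ n → (∀ a' ≤ n, bpart k n a' ≤ bpart k n a) →
      |(a : ℝ) - (n : ℝ) / 2| < Real.sqrt (2 * k * n) := by
    intro n a hn ha hmax
    by_cases h2k : 2*k ≤ n
    · by_contra hcon
      push_neg at hcon
      have habs2 : |(n:ℝ) - 2*a| = 2 * |(a:ℝ) - (n:ℝ)/2| := by
        rw [show (n:ℝ) - 2*a = -(2*((a:ℝ) - (n:ℝ)/2)) by ring, abs_neg, abs_mul]
        norm_num
      have habs : 2 * Real.sqrt (2*k*n) ≤ |(n:ℝ) - 2*a| := by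
        rw [habs2]; linarith
      have hKpos := Kpos k n a hk hn h2k ha habs
      obtain ⟨a0, ha0, hK0⟩ := exists_nonpos k n hk h2k
      have hb := bpart_eq k n a h2k ha
      have hb0 := bpart_eq k n a0 h2k ha0
      have hle : (bpart k n a0 : ℝ) ≤ (bpart k n a : ℝ) := by exact_mod_cast hmax a0 ha0
      linarith
    · push_neg at h2k
      have ha' : (a:ℝ) ≤ (n:ℝ) := by exact_mod_cast ha
      have ha0 : (0:ℝ) ≤ (a:ℝ) := by positivity
      have h1 : |(a:ℝ) - (n:ℝ)/2| ≤ (n:ℝ)/2 := by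
        rw [abs_le]
        constructor <;> linarith
      have hn8k : (n:ℝ) < 8*(k:ℝ) := by
        have : n < 8*k := by omega
        exact_mod_cast this
      have hn1 : (1:ℝ) ≤ (n:ℝ) := by
        have : 1 ≤ n := hn
        exact_mod_cast this
      have h2 : (n:ℝ)/2 < Real.sqrt (2*k*n) := by
        exact (Real.lt_sqrt (by positivity)).mpr (by nlinarith)
      linarith
  refine ⟨part1, ⟨2*k, ?_⟩⟩
  intro n hn0 a ha hmax
  have hn : 0 < n := by omega
  have h2k : 2*k ≤ n := hn0
  have h1 := part1 n a hn ha hmax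
  have hb := bpart_eq k n a h2k ha
  have hk1 : (1:ℝ) ≤ (k:ℝ) := by exact_mod_cast hk
  have hn1 : (1:ℝ) ≤ (n:ℝ) := by
    have : 1 ≤ n := hn
    exact_mod_cast this
  have hsq : Real.sqrt (2*k*n) ^ 2 = 2*(k:ℝ)*n := Real.sq_sqrt (by positivity)
  have hmabs : |(n:ℝ) - 2*a| < 2 * Real.sqrt (2*k*n) := by
    have habs2 : |(n:ℝ) - 2*a| = 2 * |(a:ℝ) - (n:ℝ)/2| := by
      rw [show (n:ℝ) - 2*a = -(2*((a:ℝ) - (n:ℝ)/2)) by ring, abs_neg, abs_mul]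
      norm_num
    rw [habs2]; linarith
  have habsK : |(Qp n a).coeff (n - 2*k)| ≤ ((k:ℝ)+1) * (8*(k:ℝ)*n)^k := by
    by_cases h2a : 2*a ≤ n
    · have hfac := Qp_factor_le n a h2a
      have hmcast : ((n - 2*a : ℕ) : ℝ) = (n:ℝ) - 2*a := by
        push_cast [Nat.cast_sub (by omega : 2*a ≤ n)]; ring
      have hmlt : ((n - 2*a : ℕ) : ℝ) < 2 * Real.sqrt (2*k*n) := by
        rw [hmcast]
        calc (n:ℝ) - 2*a ≤ |(n:ℝ) - 2*a| := le_abs_self _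
          _ < _ := hmabs
      have hm2 : (((n - 2*a : ℕ) : ℝ))^2 ≤ 8*(k:ℝ)*n := by
        have hnn : (0:ℝ) ≤ ((n - 2*a : ℕ) : ℝ) := by positivity
        nlinarith [hsq, Real.sqrt_nonneg (2*(k:ℝ)*n)]
      have := coeff_bound k n a (n - 2*a) 1 (by norm_num) (by omega) hk h2k hm2
      rw [hfac]
      exact this
    · push_neg at h2a
      have hfac := Qp_factor_ge n a ha (by omega)
      have hmcast : ((2*a - n : ℕ) : ℝ) = 2*(a:ℝ) - n := by
        push_cast [Nat.cast_sub (by omega : n ≤ 2*a)]; ring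
      have hmlt : ((2*a - n : ℕ) : ℝ) < 2 * Real.sqrt (2*k*n) := by
        rw [hmcast]
        calc 2*(a:ℝ) - n ≤ |2*(a:ℝ) - n| := le_abs_self _
          _ = |(n:ℝ) - 2*a| := by rw [← abs_neg]; congr 1; ring
          _ < _ := hmabs
      have hm2 : (((2*a - n : ℕ) : ℝ))^2 ≤ 8*(k:ℝ)*n := by
        have hnn : (0:ℝ) ≤ ((2*a - n : ℕ) : ℝ) := by positivity
        nlinarith [hsq, Real.sqrt_nonneg (2*(k:ℝ)*n)]
      have := coeff_bound k n (n - a) (2*a - n) (-1) (by norm_num) (by omega) hk h2k hm2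
      rw [hfac]
      exact this
  have hgoal : |(bpart k n a : ℝ) - (1/2) * ((n.choose (2*k)) : ℝ)|
      = |(Qp n a).coeff (n - 2*k)| / 2 := by
    rw [show (bpart k n a : ℝ) - (1/2) * ((n.choose (2*k)) : ℝ)
        = -((Qp n a).coeff (n - 2*k) / 2) by linarith, abs_neg, abs_div]
    norm_num
  rw [hgoal]
  have hcast20 : ((20*k*n : ℕ) : ℝ) = 20*(k:ℝ)*n := by push_cast; ring
  rw [hcast20]
  have hk2 : ((k:ℝ)+1) ≤ 2^k := by
    have h := @Nat.lt_two_pow_self k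
    have : ((k+1 : ℕ):ℝ) ≤ ((2^k : ℕ):ℝ) := by exact_mod_cast h
    push_cast at this
    linarith
  have h16 : ((k:ℝ)+1) * (8*(k:ℝ)*n)^k ≤ (16*(k:ℝ)*n)^k := by
    calc ((k:ℝ)+1) * (8*(k:ℝ)*n)^k ≤ 2^k * (8*(k:ℝ)*n)^k :=
          mul_le_mul_of_nonneg_right hk2 (by positivity)
      _ = (16*(k:ℝ)*n)^k := by
          rw [← mul_pow]
          congr 1
          ring
  have h20 : (16*(k:ℝ)*n)^k < (20*(k:ℝ)*n)^k := by
    apply pow_lt_pow_left₀ _ (by positivity) (by omega)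
    nlinarith
  have habs0 : 0 ≤ |(Qp n a).coeff (n - 2*k)| := abs_nonneg _
  linarith

end Main
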